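/- arXiv:1111.1067 — 3 statements merged into one kernel-verified Lean document; each statement's English description precedes it below -/
import Mathlib

section
/- Let φ, ψ : ℝ → ℂ and κ : ℝ → (0,∞) satisfy |φ(u)| ≥ 3κ(u) for all u. Define φ̃(u) := v_{κ(u)}(ψ(u)) where v_κ(z) = z if |z| ≥ κ and v_κ(z) = κz/|z| otherwise (with ψ(u) ≠ 0). Then for every u, |φ̃(u) − φ(u)| ≤ 2|ψ(u) − φ(u)|. -/
/-! Trimming moves `ψ` by at most `κ - ‖ψ‖`, and since `‖φ‖ ≥ κ` this is at most
`‖φ‖ - ‖ψ‖ ≤ ‖ψ - φ‖`; the triangle inequality through `ψ` gives the factor `2`. -/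

/-- The trimming function `v_κ`. -/
noncomputable def trim (κ : ℝ) (z : ℂ) : ℂ :=
  if κ ≤ ‖z‖ then z else (κ : ℂ) * z / (‖z‖ : ℂ)

theorem trim_of_le {κ : ℝ} {z : ℂ} (h : κ ≤ ‖z‖) : trim κ z = z := if_pos h

theorem norm_trim_sub_self_le {κ : ℝ} {z : ℂ} (h : ‖z‖ < κ) :
    ‖trim κ z - z‖ ≤ κ - ‖z‖ := by
  rcases eq_or_ne z 0 with rfl | hz
  · simpa [trim] using h.le
  have hz' : (0 : ℝ) < ‖z‖ := norm_pos_iff.mpr hz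
  have hscale : trim κ z - z = ((κ / ‖z‖ - 1 : ℝ) : ℂ) * z := by
    have : (‖z‖ : ℂ) ≠ 0 := by exact_mod_cast hz'.ne'
    simp only [trim, h.not_ge, if_false]
    push_cast
    field_simp
  have hcoeff : 0 ≤ κ / ‖z‖ - 1 := by
    rw [sub_nonneg, one_le_div hz']
    exact h.le
  rw [hscale, norm_mul, Complex.norm_real, Real.norm_of_nonneg hcoeff, sub_mul,
    div_mul_cancel₀ _ hz'.ne', one_mul]

theorem norm_trim_sub_self_le_norm_sub {κ : ℝ} {z w : ℂ} (hw : κ ≤ ‖w‖) :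
    ‖trim κ z - z‖ ≤ ‖z - w‖ := by
  rcases le_or_gt κ ‖z‖ with h | h
  · simp [trim_of_le h]
  · calc ‖trim κ z - z‖ ≤ κ - ‖z‖ := norm_trim_sub_self_le h
      _ ≤ ‖w‖ - ‖z‖ := by linarith
      _ ≤ ‖z - w‖ := by simpa only [norm_sub_rev z w] using norm_sub_norm_le w z

theorem norm_trim_sub_le_two_mul {κ : ℝ} {z w : ℂ} (hw : κ ≤ ‖w‖) :
    ‖trim κ z - w‖ ≤ 2 * ‖z - w‖ := by
  calc ‖trim κ z - w‖ ≤ ‖trim κ z - z‖ + ‖z - w‖ := norm_sub_le_norm_sub_add_norm_sub _ _ _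
    _ ≤ 2 * ‖z - w‖ := by linarith [norm_trim_sub_self_le_norm_sub (z := z) hw]

theorem stmt2_general (φ ψ : ℝ → ℂ) (κ : ℝ → ℝ) (hφ : ∀ u, 3 * κ u ≤ ‖φ u‖) :
    ∀ u, ‖trim (κ u) (ψ u) - φ u‖ ≤ 2 * ‖ψ u - φ u‖ := by
  intro u
  refine norm_trim_sub_le_two_mul ?_
  rcases le_or_gt 0 (κ u) with hκ | hκ
  · linarith [hφ u]
  · linarith [norm_nonneg (φ u)]

theorem stmt2 (φ ψ : ℝ → ℂ) (κ : ℝ → ℝ) (hκ : ∀ u, 0 < κ u)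
    (hψ : ∀ u, ψ u ≠ 0) (hφ : ∀ u, 3 * κ u ≤ ‖φ u‖) :
    ∀ u, ‖trim (κ u) (ψ u) - φ u‖ ≤ 2 * ‖ψ u - φ u‖ :=
  stmt2_general φ ψ κ hφ
end

section
/- Let T > 0, α ≥ 0 and k : ℝ → ℝ≥0 with bounded variation, k(0+) + k(0−) = α, q_k := sup_{x∈(0,1]} (k(x)+k(−x)−α)/x < ∞ and ‖e^x k(x)‖_{L^1} < ∞, and suppose the martingale condition holds. Then there is a constant C_φ > 0 depending only on T and max{q_k, ‖e^x k‖_{L^1}, ‖k‖_{TV}} such that |φ_T(u−i)| ≥ C_φ |u|^{−Tα} for all |u| ≥ 1, where φ_T(u−i) = exp(T ∫ (cos(ux)−1) e^x k(x)/|x| dx). -/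
/-!
Write `U = |u|`. Symmetrising under `x ↦ -x` turns `-log φ_T(u-i) / T` into the integral
over `x > 0` of `(1 - cos (U x)) (e^x k(x) + e^{-x} k(-x)) / x`. For `x > 1` the integrand is
at most `2 (e^x k(x) + e^{-x} k(-x))`, which contributes at most `2 ‖e^x k‖_{L¹}`.
For `0 < x ≤ 1`, the bound on `q_k` together with `k ≤ ‖k‖_TV` (a function of bounded
variation that is integrable against `e^x` has infimum `0`) gives
`e^x k(x) + e^{-x} k(-x) ≤ α + 3 R x`, so this part is at most
`α ∫₀¹ (1 - cos (U x)) / x dx + 6 R`. Splitting at `1 / U` and integrating `cos (U x) / x` by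
parts gives `∫₀¹ (1 - cos (U x)) / x dx ≤ log U + 3`, and `α = k(0+) + k(0-) ≤ 2 R` absorbs
the leftover `3 α`. Hence `|φ_T(u-i)| ≥ e^{-14 T R} U^{-T α}`.
-/

open MeasureTheory Filter Real Set
open scoped Interval

theorem neg_two_div_le_integral_cos_mul_div {U a b : ℝ} (hU : 0 < U) (ha : 0 < a)
    (hab : a ≤ b) :
    -(2 / (U * a)) ≤ ∫ x in a..b, cos (U * x) / x := by
  have hpos : ∀ x ∈ [[a, b]], 0 < x := fun x hx =>
    ha.trans_le (by rw [uIcc_of_le hab] at hx; exact hx.1)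
  have hu : ∀ x ∈ [[a, b]], HasDerivAt (fun x : ℝ => x⁻¹) (-(x ^ 2)⁻¹) x :=
    fun x hx => hasDerivAt_inv (hpos x hx).ne'
  have hv : ∀ x ∈ [[a, b]], HasDerivAt (fun x => sin (U * x) / U) (cos (U * x)) x := by
    intro x _
    simpa [hU.ne'] using (((hasDerivAt_id x).const_mul U).sin.div_const U)
  have hu' : IntervalIntegrable (fun x : ℝ => -(x ^ 2)⁻¹) volume a b :=
    (ContinuousOn.inv₀ (by fun_prop) fun x hx =>
      pow_ne_zero 2 (hpos x hx).ne').neg.intervalIntegrable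
  have hibp := intervalIntegral.integral_mul_deriv_eq_deriv_mul hu hv hu'
    ((by fun_prop : Continuous fun x => cos (U * x)).intervalIntegrable a b)
  have hrem : ∫ x in a..b, -(x ^ 2)⁻¹ * (sin (U * x) / U) ≤ (a⁻¹ - b⁻¹) / U := by
    calc _ ≤ ∫ x in a..b, -(-(x ^ 2)⁻¹) / U :=
          intervalIntegral.integral_mono_on hab (hu'.mul_continuousOn (by fun_prop))
            (hu'.neg.div_const U)
            fun x _ => by
              have := neg_one_le_sin (U * x)
              rw [neg_neg, neg_mul, ← mul_div_assoc, ← neg_div]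
              gcongr
              nlinarith [inv_nonneg.2 (sq_nonneg x)]
      _ = _ := by rw [intervalIntegral.integral_div, intervalIntegral.integral_neg,
          intervalIntegral.integral_eq_sub_of_hasDerivAt hu hu']; ring
  have hb : -(b⁻¹ / U) ≤ b⁻¹ * (sin (U * b) / U) := by
    rw [← mul_div_assoc, ← neg_div]
    gcongr
    nlinarith [neg_one_le_sin (U * b), inv_pos.2 (ha.trans_le hab)]
  have ha' : a⁻¹ * (sin (U * a) / U) ≤ a⁻¹ / U := by
    rw [← mul_div_assoc]
    gcongr
    nlinarith [sin_le_one (U * a), inv_pos.2 ha]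
  have hcongr : ∫ x in a..b, cos (U * x) / x = ∫ x in a..b, x⁻¹ * cos (U * x) :=
    intervalIntegral.integral_congr fun x _ => div_eq_inv_mul _ _
  have htotal : 2 / (U * a) = b⁻¹ / U + a⁻¹ / U + (a⁻¹ - b⁻¹) / U := by field_simp; ring
  rw [hcongr, hibp]
  linarith

theorem one_sub_cos_mul_div_le {U x : ℝ} (hx : 0 ≤ x) :
    (1 - cos (U * x)) / x ≤ U ^ 2 * x / 2 :=
  div_le_of_le_mul₀ hx (by positivity) (by nlinarith [one_sub_sq_div_two_le_cos (x := U * x)])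

theorem integrableOn_one_sub_cos_mul_div (U : ℝ) :
    IntegrableOn (fun x => (1 - cos (U * x)) / x) (Ioc 0 1) := by
  refine Measure.integrableOn_of_bounded (M := U ^ 2 / 2) measure_Ioc_lt_top.ne
    (by fun_prop : Measurable fun x : ℝ => (1 - cos (U * x)) / x).aestronglyMeasurable
    ((ae_restrict_iff' measurableSet_Ioc).2 (ae_of_all _ fun x hx => ?_))
  rw [norm_of_nonneg (div_nonneg (by linarith [cos_le_one (U * x)]) hx.1.le)]
  calc _ ≤ U ^ 2 * x / 2 := one_sub_cos_mul_div_le hx.1.le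
    _ ≤ U ^ 2 / 2 := by gcongr; exact mul_le_of_le_one_right (sq_nonneg U) hx.2

theorem setIntegral_one_sub_cos_mul_div_le {u : ℝ} (hu : 1 ≤ |u|) :
    ∫ x in Ioc 0 1, (1 - cos (u * x)) / x ≤ log |u| + 3 := by
  have hcos : ∀ x, cos (u * x) = cos (|u| * x) := fun x => by
    rcases abs_choice u with h | h <;> simp [h]
  simp_rw [hcos]
  generalize |u| = U at hu ⊢
  have hU0 : 0 < U := one_pos.trans_le hu
  have hc0 : 0 < 1 / U := by positivity
  have hc1 : 1 / U ≤ 1 := (div_le_one hU0).2 hu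
  have hc : 1 / U ∈ [[0, 1]] := mem_uIcc_of_le hc0.le hc1
  have hint : IntervalIntegrable (fun x => (1 - cos (U * x)) / x) volume 0 1 :=
    (intervalIntegrable_iff_integrableOn_Ioc_of_le zero_le_one).2
      (integrableOn_one_sub_cos_mul_div U)
  have hsmall : ∫ x in 0..1 / U, (1 - cos (U * x)) / x ≤ 1 / 4 :=
    calc _ ≤ ∫ x in 0..1 / U, U ^ 2 * x / 2 :=
          intervalIntegral.integral_mono_on hc0.le
            (hint.mono_set (uIcc_subset_uIcc left_mem_uIcc hc))
            ((by fun_prop : Continuous fun x : ℝ => U ^ 2 * x / 2).intervalIntegrable _ _)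
            fun x hx => one_sub_cos_mul_div_le hx.1
      _ = 1 / 4 := by
          rw [intervalIntegral.integral_div, intervalIntegral.integral_const_mul, integral_id]
          field_simp
          ring
  have hne : ∀ x ∈ [[1 / U, 1]], x ≠ 0 := fun x hx =>
    (hc0.trans_le (by rw [uIcc_of_le hc1] at hx; exact hx.1)).ne'
  have hlarge : ∫ x in 1 / U..1, (1 - cos (U * x)) / x
      = log U - ∫ x in 1 / U..1, cos (U * x) / x := by
    have hlog : ∫ x in 1 / U..1, 1 / x = log U := by
      rw [integral_one_div fun h => hne 0 h rfl, one_div_one_div]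
    have hinv : IntervalIntegrable (fun x => 1 / x) volume (1 / U) 1 :=
      (continuousOn_const.div continuousOn_id hne).intervalIntegrable
    have hcosdiv : IntervalIntegrable (fun x => cos (U * x) / x) volume (1 / U) 1 :=
      ((by fun_prop : Continuous fun x => cos (U * x)).continuousOn.div continuousOn_id
        hne).intervalIntegrable
    rw [← hlog, ← intervalIntegral.integral_sub hinv hcosdiv]
    exact intervalIntegral.integral_congr fun x _ => sub_div _ _ _
  have hosc := neg_two_div_le_integral_cos_mul_div hU0 hc0 hc1
  rw [mul_one_div_cancel hU0.ne'] at hosc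
  rw [← intervalIntegral.integral_of_le zero_le_one,
    ← intervalIntegral.integral_add_adjacent_intervals
      (hint.mono_set (uIcc_subset_uIcc left_mem_uIcc hc))
      (hint.mono_set (uIcc_subset_uIcc hc right_mem_uIcc)), hlarge]
  linarith

theorem integrableOn_Ioi_of_integrable_exp_mul {f : ℝ → ℝ}
    (hf : Integrable fun x => exp x * f x) : IntegrableOn f (Ioi 0) := by
  have hbdd : ∀ᵐ x ∂volume.restrict (Ioi 0), ‖exp (-x)‖ ≤ 1 :=
    (ae_restrict_iff' measurableSet_Ioi).2 (ae_of_all _ fun x (hx : 0 < x) => by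
      rw [norm_of_nonneg (exp_pos _).le]; exact exp_le_one_iff.2 (by linarith))
  have : IntegrableOn (fun x => exp (-x) * (exp x * f x)) (Ioi 0) :=
    hf.integrableOn.bdd_mul (by fun_prop : Continuous fun x => exp (-x)).aestronglyMeasurable hbdd
  refine this.congr_fun (fun x _ => ?_) measurableSet_Ioi
  dsimp only
  rw [← mul_assoc, ← exp_add, neg_add_cancel, exp_zero, one_mul]

theorem le_of_eVariationOn_le_of_integrableOn {f : ℝ → ℝ} {R : ℝ} {s : Set ℝ}
    (hR : 0 ≤ R) (hvar : eVariationOn f univ ≤ ENNReal.ofReal R) (hf : IntegrableOn f s)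
    (hs : volume s = ⊤) (x : ℝ) : f x ≤ R := by
  by_contra! hx
  have hlow : ∀ y, f x - R ≤ f y := fun y => by
    have := (eVariationOn.edist_le f (mem_univ x) (mem_univ y)).trans hvar
    rw [edist_dist, ENNReal.ofReal_le_ofReal_iff hR, Real.dist_eq] at this
    linarith [le_abs_self (f x - f y)]
  have hconst : IntegrableOn (fun _ => f x - R) s :=
    hf.mono' aestronglyMeasurable_const (ae_of_all _ fun y => by
      rw [norm_of_nonneg (by linarith)]; exact hlow y)
  rw [integrableOn_const_iff] at hconst
  simp [hs, (sub_pos.2 hx).ne'] at hconst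

theorem exp_mul_add_exp_neg_mul_le {a b α R x : ℝ} (ha0 : 0 ≤ a) (haR : a ≤ R)
    (hb0 : 0 ≤ b) (hx : x ∈ Ioc 0 1) (hq : (a + b - α) / x ≤ R) :
    exp x * a + exp (-x) * b ≤ α + 3 * R * x := by
  have hexp : exp x ≤ 1 + 2 * x := by
    have := (abs_le.1 (abs_exp_sub_one_le (abs_le.2 ⟨by linarith [hx.1], hx.2⟩))).2
    rw [abs_of_pos hx.1] at this
    linarith
  have hexpneg : exp (-x) ≤ 1 := exp_le_one_iff.2 (by linarith [hx.1])
  rw [div_le_iff₀ hx.1] at hq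
  nlinarith [mul_le_mul_of_nonneg_right hexp ha0, mul_le_mul_of_nonneg_right hexpneg hb0,
    mul_le_mul_of_nonneg_left haR hx.1.le]

theorem integral_eq_setIntegral_Ioi_add_comp_neg {E : Type*} [NormedAddCommGroup E]
    [NormedSpace ℝ E] {f : ℝ → E} (hf : Integrable f) :
    ∫ x, f x = ∫ x in Ioi 0, (f x + f (-x)) := by
  rw [integral_add hf.integrableOn hf.comp_neg.integrableOn, integral_comp_neg_Ioi, neg_zero,
    add_comm, ← compl_Iic, integral_add_compl measurableSet_Iic hf]

theorem integral_one_sub_cos_mul_div_abs_le {h : ℝ → ℝ} {α R u : ℝ} (hu : 1 ≤ |u|)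
    (hα : 0 ≤ α) (h0 : ∀ x, 0 ≤ h x) (hint : Integrable h) (hL1 : ∫ x, h x ≤ R)
    (hnear : ∀ x ∈ Ioc (0 : ℝ) 1, h x + h (-x) ≤ α + 3 * R * x)
    (hg : Integrable fun x => (1 - cos (u * x)) * (h x / |x|)) :
    ∫ x, (1 - cos (u * x)) * (h x / |x|) ≤ α * log |u| + 3 * α + 8 * R := by
  set g : ℝ → ℝ := fun x => (1 - cos (u * x)) * (h x / |x|)
  have hR : 0 ≤ R := (integral_nonneg h0).trans hL1
  have hcos : ∀ x, 0 ≤ 1 - cos (u * x) ∧ 1 - cos (u * x) ≤ 2 := fun x =>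
    ⟨by linarith [cos_le_one (u * x)], by linarith [neg_one_le_cos (u * x)]⟩
  have hsym : ∀ x, 0 < x → g x + g (-x) = (1 - cos (u * x)) * ((h x + h (-x)) / x) :=
    fun x hx => by simp only [g, mul_neg, cos_neg, abs_neg, abs_of_pos hx]; ring
  have hG : IntegrableOn (fun x => g x + g (-x)) (Ioi 0) := (hg.add hg.comp_neg).integrableOn
  have hinner : ∫ x in Ioc 0 1, (g x + g (-x)) ≤ α * (log |u| + 3) + 6 * R := by
    calc _ ≤ ∫ x in Ioc 0 1, (α * ((1 - cos (u * x)) / x) + 6 * R) := by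
          refine setIntegral_mono_on (hG.mono_set Ioc_subset_Ioi_self)
            (((integrableOn_one_sub_cos_mul_div u).const_mul α).add
              (integrableOn_const measure_Ioc_lt_top.ne)) measurableSet_Ioc fun x hx => ?_
          rw [hsym x hx.1]
          calc _ ≤ (1 - cos (u * x)) * ((α + 3 * R * x) / x) :=
                mul_le_mul_of_nonneg_left (div_le_div_of_nonneg_right (hnear x hx) hx.1.le)
                  (hcos x).1
            _ = α * ((1 - cos (u * x)) / x) + 3 * R * (1 - cos (u * x)) := by
                field_simp [hx.1.ne']
            _ ≤ _ := by nlinarith [(hcos x).2]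
      _ = α * (∫ x in Ioc 0 1, (1 - cos (u * x)) / x) + 6 * R := by
          rw [integral_add ((integrableOn_one_sub_cos_mul_div u).const_mul α)
            (integrableOn_const measure_Ioc_lt_top.ne), integral_const_mul, setIntegral_const]
          simp
      _ ≤ _ := by gcongr; exact setIntegral_one_sub_cos_mul_div_le hu
  have hH : Integrable fun x => 2 * (h x + h (-x)) := (hint.add hint.comp_neg).const_mul 2
  have houter : ∫ x in Ioi 1, (g x + g (-x)) ≤ 2 * R :=
    calc _ ≤ ∫ x in Ioi 1, 2 * (h x + h (-x)) := by
          refine setIntegral_mono_on (hG.mono_set (Ioi_subset_Ioi zero_le_one)) hH.integrableOn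
            measurableSet_Ioi fun x (hx : 1 < x) => ?_
          rw [hsym x (zero_lt_one.trans hx)]
          exact mul_le_mul (hcos x).2 (div_le_self (add_nonneg (h0 x) (h0 (-x))) hx.le)
            (div_nonneg (add_nonneg (h0 x) (h0 (-x))) (zero_le_one.trans hx.le)) zero_le_two
      _ ≤ ∫ x in Ioi 0, 2 * (h x + h (-x)) :=
          setIntegral_mono_set hH.integrableOn
            (ae_of_all _ fun x => mul_nonneg zero_le_two (add_nonneg (h0 x) (h0 (-x))))
            (Ioi_subset_Ioi zero_le_one).eventuallyLE
      _ = 2 * ∫ x, h x := by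
          rw [integral_const_mul, integral_eq_setIntegral_Ioi_add_comp_neg hint]
      _ ≤ 2 * R := by linarith
  rw [integral_eq_setIntegral_Ioi_add_comp_neg hg, ← Ioc_union_Ioi_eq_Ioi zero_le_one,
    setIntegral_union (Ioc_disjoint_Ioi le_rfl) measurableSet_Ioi
      (hG.mono_set Ioc_subset_Ioi_self) (hG.mono_set (Ioi_subset_Ioi zero_le_one))]
  linarith

/-- Lemma 1(i): polynomial lower bound for `|φ_T(u-i)|`, with the constant depending
only on `T` and a common bound `R` on `q_k`, `‖e^x k‖_{L¹}` and `‖k‖_{TV}`. -/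
theorem stmt10 (T R : ℝ) (hT : 0 < T) (hR : 0 < R) :
    ∃ C > 0, ∀ (α : ℝ) (k : ℝ → ℝ) (γ a b : ℝ),
      0 ≤ α →
      (∀ x, 0 ≤ k x) →
      eVariationOn k Set.univ ≤ ENNReal.ofReal R →
      Tendsto k (nhdsWithin 0 (Set.Ioi 0)) (nhds a) →
      Tendsto k (nhdsWithin 0 (Set.Iio 0)) (nhds b) →
      a + b = α →
      (∀ x ∈ Set.Ioc (0 : ℝ) 1, (k x + k (-x) - α) / x ≤ R) →
      Integrable (fun x : ℝ => Real.exp x * k x) →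
      (∫ x : ℝ, |Real.exp x * k x|) ≤ R →
      Integrable (fun x : ℝ => (Real.exp x - 1) * k x / |x|) →
      γ + (∫ x : ℝ, (Real.exp x - 1) * k x / |x|) = 0 →
      (∀ u : ℝ, Integrable (fun x : ℝ => (Real.cos (u * x) - 1) * (Real.exp x * k x / |x|))) →
      ∀ u : ℝ, 1 ≤ |u| →
        C * |u| ^ (-(T * α)) ≤
          Real.exp (T * ∫ x : ℝ, (Real.cos (u * x) - 1) * (Real.exp x * k x / |x|)) := by
  refine ⟨exp (-(T * (14 * R))), exp_pos _, ?_⟩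
  intro α k γ a b hα hk0 hvar ha hb hab hq hint hL1 _ _ hcosint u hu
  have hkR : ∀ x, k x ≤ R := le_of_eVariationOn_le_of_integrableOn hR.le hvar
    (integrableOn_Ioi_of_integrable_exp_mul hint) volume_Ioi
  have hα2R : α ≤ 2 * R := hab ▸ by
    linarith [le_of_tendsto ha (Eventually.of_forall hkR),
      le_of_tendsto hb (Eventually.of_forall hkR)]
  have hbound := integral_one_sub_cos_mul_div_abs_le (h := fun x => exp x * k x) hu hα
    (fun x => mul_nonneg (exp_pos x).le (hk0 x)) hint
    ((integral_mono hint hint.abs fun x => le_abs_self _).trans hL1)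
    (fun x hx => exp_mul_add_exp_neg_mul_le (hk0 x) (hkR x) (hk0 (-x)) hx (hq x hx))
    ((hcosint u).neg.congr (ae_of_all _ fun x => by simp only [Pi.neg_apply]; ring))
  have hneg : ∫ x, (cos (u * x) - 1) * (exp x * k x / |x|)
      = -∫ x, (1 - cos (u * x)) * (exp x * k x / |x|) := by
    rw [← integral_neg]; congr 1; ext x; ring
  rw [hneg, rpow_def_of_pos (one_pos.trans_le hu), ← exp_add]
  refine exp_le_exp.2 ?_
  nlinarith [mul_le_mul_of_nonneg_left hbound hT.le, mul_le_mul_of_nonneg_left hα2R hT.le]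
end

section
/- For any u ≥ 1 and any bounded measurable k̃ : (0,1] → ℝ with k̃ bounded by M and α ∈ ℝ, one has ∫_{1}^{u} (cos x − 1)/x · k̃(x/u) dx ≥ −α log u + ∫_{1/u}^{1} (α − k̃(x))/x dx + ∫_{1/u}^{1} cos(ux)/x · k̃(x) dx − 2eM, using the decomposition (cos x − 1)/x = cos(x)/x − 1/x after substitution x ↦ ux. -/
/-!
Substituting `x ↦ u x` (the measure `dx / x` is scale invariant) turns the left-hand side into
`∫_{1/u}^1 (cos (u x) - 1) / x · k̃ x dx`. Splitting off `∫ k̃ x / x` and writing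
`k̃ = α - (α - k̃)` with `∫_{1/u}^1 dx / x = log u` gives the right-hand side with `-2eM`
replaced by `0`; and `M ≥ 0` since it bounds `|k̃ 1|`.
-/

open intervalIntegral

theorem intervalIntegral.integral_comp_mul_left_div_self {c : ℝ} (hc : c ≠ 0) (f : ℝ → ℝ)
    (a b : ℝ) : ∫ x in a..b, f (c * x) / x = ∫ x in c * a..c * b, f x / x := by
  calc ∫ x in a..b, f (c * x) / x = c * ∫ x in a..b, f (c * x) / (c * x) := by
        rw [← integral_const_mul]
        exact integral_congr fun x _ => by rw [← mul_div_assoc, mul_div_mul_left _ _ hc]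
    _ = ∫ x in c * a..c * b, f x / x := by
        rw [integral_comp_mul_left (fun x => f x / x) hc, smul_eq_mul, mul_inv_cancel_left₀ hc]

theorem intervalIntegral.intervalIntegrable_const_div_self {a b : ℝ} (α : ℝ)
    (h0 : (0 : ℝ) ∉ Set.uIcc a b) :
    IntervalIntegrable (fun x => α / x) MeasureTheory.volume a b :=
  (continuousOn_const.div continuousOn_id fun _ hx h => h0 (h ▸ hx)).intervalIntegrable

theorem intervalIntegral.integral_div_self_eq_mul_log_sub {a b α : ℝ} (h0 : (0 : ℝ) ∉ Set.uIcc a b)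
    {k : ℝ → ℝ} (hk : IntervalIntegrable (fun x => (α - k x) / x) MeasureTheory.volume a b) :
    ∫ x in a..b, k x / x = α * Real.log (b / a) - ∫ x in a..b, (α - k x) / x := by
  calc ∫ x in a..b, k x / x = ∫ x in a..b, (α / x - (α - k x) / x) :=
        integral_congr fun x _ => by ring
    _ = α * Real.log (b / a) - ∫ x in a..b, (α - k x) / x := by
        rw [integral_sub (intervalIntegrable_const_div_self α h0) hk]
        simp_rw [div_eq_mul_one_div α]
        rw [integral_const_mul, integral_one_div h0]

theorem integral_cos_sub_one_div_mul_comp_div_eq {u α : ℝ} (hu : 0 < u) {k : ℝ → ℝ}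
    (hk : IntervalIntegrable (fun x => (α - k x) / x) MeasureTheory.volume (1 / u) 1)
    (hcos : IntervalIntegrable (fun x => Real.cos (u * x) / x * k x)
      MeasureTheory.volume (1 / u) 1) :
    ∫ x in (1 : ℝ)..u, (Real.cos x - 1) / x * k (x / u) =
      -α * Real.log u + (∫ x in (1 / u : ℝ)..1, (α - k x) / x) +
        ∫ x in (1 / u : ℝ)..1, Real.cos (u * x) / x * k x := by
  have h0 : (0 : ℝ) ∉ Set.uIcc (1 / u) 1 := fun h => by
    rcases Set.mem_uIcc.mp h with h | h <;> linarith [h.1, one_div_pos.mpr hu]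
  have hdiv : IntervalIntegrable (fun x => k x / x) MeasureTheory.volume (1 / u) 1 :=
    ((intervalIntegrable_const_div_self α h0).sub hk).congr fun x _ => by ring
  have hscale : ∫ x in (1 : ℝ)..u, (Real.cos x - 1) / x * k (x / u) =
      ∫ x in (1 / u : ℝ)..1, (Real.cos (u * x) - 1) / x * k x := by
    have := integral_comp_mul_left_div_self hu.ne' (fun y => (Real.cos y - 1) * k (y / u)) (1 / u) 1
    simp only [mul_one_div_cancel hu.ne', mul_one, mul_div_cancel_left₀ _ hu.ne'] at this
    calc _ = ∫ x in (1 : ℝ)..u, (Real.cos x - 1) * k (x / u) / x :=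
          integral_congr fun x _ => div_mul_eq_mul_div ..
      _ = _ := this.symm
      _ = _ := integral_congr fun x _ => (div_mul_eq_mul_div ..).symm
  have hsplit : ∫ x in (1 / u : ℝ)..1, (Real.cos (u * x) - 1) / x * k x =
      (∫ x in (1 / u : ℝ)..1, Real.cos (u * x) / x * k x) - ∫ x in (1 / u : ℝ)..1, k x / x := by
    rw [← integral_sub hcos hdiv]
    exact integral_congr fun x _ => by ring
  rw [hscale, hsplit, integral_div_self_eq_mul_log_sub h0 hk, one_div_one_div]
  ring

theorem stmt11_general (u M α : ℝ) (hu : 1 ≤ u) (ktil : ℝ → ℝ)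
    (hM : ∀ x ∈ Set.Ioc (0 : ℝ) 1, |ktil x| ≤ M)
    (h2 : IntervalIntegrable (fun x => (α - ktil x) / x) MeasureTheory.volume (1 / u) 1)
    (h3 : IntervalIntegrable (fun x => Real.cos (u * x) / x * ktil x)
      MeasureTheory.volume (1 / u) 1) :
    (∫ x in (1 : ℝ)..u, (Real.cos x - 1) / x * ktil (x / u)) ≥
      -α * Real.log u + (∫ x in (1 / u : ℝ)..1, (α - ktil x) / x) +
        (∫ x in (1 / u : ℝ)..1, Real.cos (u * x) / x * ktil x) -
          2 * Real.exp 1 * M := by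
  have hM0 : 0 ≤ M := (abs_nonneg _).trans (hM 1 ⟨one_pos, le_rfl⟩)
  rw [integral_cos_sub_one_div_mul_comp_div_eq (one_pos.trans_le hu) h2 h3]
  have : 0 ≤ 2 * Real.exp 1 * M := by positivity
  linarith

theorem stmt11 (u M α : ℝ) (hu : 1 ≤ u) (ktil : ℝ → ℝ)
    (hM : ∀ x ∈ Set.Ioc (0 : ℝ) 1, |ktil x| ≤ M)
    (h1 : IntervalIntegrable (fun x => (Real.cos x - 1) / x * ktil (x / u))
      MeasureTheory.volume 1 u)
    (h2 : IntervalIntegrable (fun x => (α - ktil x) / x) MeasureTheory.volume (1 / u) 1)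
    (h3 : IntervalIntegrable (fun x => Real.cos (u * x) / x * ktil x)
      MeasureTheory.volume (1 / u) 1) :
    (∫ x in (1 : ℝ)..u, (Real.cos x - 1) / x * ktil (x / u)) ≥
      -α * Real.log u + (∫ x in (1 / u : ℝ)..1, (α - ktil x) / x) +
        (∫ x in (1 / u : ℝ)..1, Real.cos (u * x) / x * ktil x) -
          2 * Real.exp 1 * M :=
  stmt11_general u M α hu ktil hM h2 h3
end
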